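/- In the setting of the previous min-max bound, if additionally λ_k = Λ and the numbers b(ψ_i,ψ_i)/∥ψ_i∥² are all ≤ Λ, then any linear combination ψ = c₁ψ₁ + ... + c_kψ_k with all c_i ≠ 0 that is orthogonal in H to φ₁, ..., φ_{k−1} and achieves b(ψ,ψ)/∥ψ∥² = λ_k is an eigenvector of the operator generated by b with eigenvalue λ_k. -/

import Mathlib

open scoped RealInnerProductSpace

variable {H : Type*} [NormedAddCommGroup H] [InnerProductSpace ℝ H] [CompleteSpace H]

/-- The squared form norm `‖u‖_b² = b(u,u) + ‖u‖²` on the domain `W` of a bilinear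
form `b`. -/
def formNormSq (W : Submodule ℝ H) (b : W →ₗ[ℝ] W →ₗ[ℝ] ℝ) (u : W) : ℝ :=
  b u u + ‖(u : H)‖ ^ 2

/-- The form `b` with domain `W` is *closed*: `W` is complete in the form norm. -/
def IsClosedForm (W : Submodule ℝ H) (b : W →ₗ[ℝ] W →ₗ[ℝ] ℝ) : Prop :=
  ∀ u : ℕ → W,
    (∀ ε > (0 : ℝ), ∃ N, ∀ m ≥ N, ∀ n ≥ N, formNormSq W b (u m - u n) < ε) →
    ∃ v : W, Filter.Tendsto (fun n => formNormSq W b (u n - v)) Filter.atTop (nhds 0)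

/-- The inclusion `(W, ‖·‖_b) → H` is compact: every sequence bounded in the form norm
has a subsequence converging in `H`. -/
def IsCompactlyEmbedded (W : Submodule ℝ H) (b : W →ₗ[ℝ] W →ₗ[ℝ] ℝ) : Prop :=
  ∀ u : ℕ → W, (∃ C : ℝ, ∀ n, formNormSq W b (u n) ≤ C) →
    ∃ (v : H) (s : ℕ → ℕ), StrictMono s ∧
      Filter.Tendsto (fun n => ((u (s n) : H))) Filter.atTop (nhds v)

/-- The `μ`-eigenspace of the self-adjoint operator generated by the form `b` with
domain `W`, described weakly: `u ∈ W` with `b(u,v) = μ⟪u,v⟫` for all `v ∈ W`. -/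
def weakEigenspace (W : Submodule ℝ H) (b : W →ₗ[ℝ] W →ₗ[ℝ] ℝ) (μ : ℝ) :
    Submodule ℝ W where
  carrier := {u | ∀ v : W, b u v = μ * ⟪(u : H), (v : H)⟫}
  add_mem' := by
    intro x y hx hy v
    simp only [map_add, LinearMap.add_apply, hx v, hy v, Submodule.coe_add,
      inner_add_left]
    ring
  zero_mem' := by
    intro v
    simp
  smul_mem' := by
    intro c x hx v
    simp only [map_smul, LinearMap.smul_apply, hx v, Submodule.coe_smul,
      real_inner_smul_left, smul_eq_mul]
    ring

/-!
On the `H`-orthogonal complement of `φ 0, …, φ (k - 2)` in `W` the shifted form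
`B = b - λ_{k-1} ⟪·, ·⟫` is nonnegative: expanding in the eigenbasis, Parseval and the
monotonicity of the eigenvalues give `b u u ≥ ∑ λₙ ⟪φₙ, u⟫² ≥ λ_{k-1} ‖u‖²`.
Equality in the Rayleigh quotient says `B ψ ψ = 0`, and a null vector of a nonnegative
symmetric form lies in its radical (the quadratic `t ↦ B (ψ + t w) (ψ + t w)` has a double
root at `0`). So `B ψ w = 0` on that complement, and also for `w = φ m`, `m < k - 1`, since
`ψ ⊥ φ m`; these together span `W`.
-/

section Algebra

variable {M : Type*} [AddCommGroup M] [Module ℝ M]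

theorem LinearMap.apply_eq_zero_of_nonneg_of_apply_self_eq_zero
    (B : M →ₗ[ℝ] M →ₗ[ℝ] ℝ) (hB : ∀ x y, B x y = B y x) {S : Submodule ℝ M}
    (hpos : ∀ u ∈ S, 0 ≤ B u u) {x y : M} (hx : x ∈ S) (hy : y ∈ S) (hxx : B x x = 0) :
    B x y = 0 := by
  have hdiscr : discrim (B y y) (2 * B x y) 0 ≤ 0 := by
    refine discrim_le_zero fun t => ?_
    have h := hpos (x + t • y) (S.add_mem hx (S.smul_mem t hy))
    simp only [map_add, map_smul, LinearMap.add_apply, LinearMap.smul_apply, smul_eq_mul,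
      hxx, hB y x] at h
    linarith
  rw [discrim] at hdiscr
  nlinarith

end Algebra

section FormEigen

variable {E : Type*} [NormedAddCommGroup E] [InnerProductSpace ℝ E]
  {W : Submodule ℝ E} {b : W →ₗ[ℝ] W →ₗ[ℝ] ℝ} {ι : Type*} {φ : ι → W} {lam : ι → ℝ}

theorem form_sum_smul_apply_of_eigen
    (heig : ∀ n v, b (φ n) v = lam n * ⟪(φ n : E), (v : E)⟫) (s : Finset ι) (a : ι → ℝ)
    (v : W) : b (∑ n ∈ s, a n • φ n) v = ∑ n ∈ s, a n * lam n * ⟪(φ n : E), (v : E)⟫ := by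
  simp only [map_sum, map_smul, LinearMap.sum_apply, LinearMap.smul_apply,
    smul_eq_mul, heig, mul_assoc]

theorem sum_eigenvalue_mul_inner_sq_le (hsymm : ∀ u v : W, b u v = b v u)
    (hnonneg : ∀ u : W, 0 ≤ b u u) (horth : Orthonormal ℝ fun n => (φ n : E))
    (heig : ∀ n v, b (φ n) v = lam n * ⟪(φ n : E), (v : E)⟫) (s : Finset ι) (u : W) :
    ∑ n ∈ s, lam n * ⟪(φ n : E), (u : E)⟫ ^ 2 ≤ b u u := by
  set a : ι → ℝ := fun n => ⟪(φ n : E), (u : E)⟫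
  set p : W := ∑ n ∈ s, a n • φ n
  have hinner_p : ∀ n ∈ s, ⟪(φ n : E), (p : E)⟫ = a n := fun n hn => by
    simpa only [p, Submodule.coe_sum, Submodule.coe_smul] using
      horth.inner_right_sum a hn
  have hpu : b p u = ∑ n ∈ s, lam n * a n ^ 2 := by
    rw [form_sum_smul_apply_of_eigen heig]
    exact Finset.sum_congr rfl fun n _ => by ring
  have hpp : b p p = ∑ n ∈ s, lam n * a n ^ 2 := by
    rw [form_sum_smul_apply_of_eigen heig]
    exact Finset.sum_congr rfl fun n hn => by rw [hinner_p n hn]; ring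
  have hexpand : b (u - p) (u - p) = b u u - b u p - b p u + b p p := by
    simp only [map_sub, LinearMap.sub_apply]
    ring
  have := hnonneg (u - p)
  rw [hexpand, hsymm u p, hpu, hpp] at this
  linarith

end FormEigen

section Truncation

variable {E : Type*} [NormedAddCommGroup E] [InnerProductSpace ℝ E] {W : Submodule ℝ E}

noncomputable def orthToFirst (φ : ℕ → W) (k : ℕ) : Submodule ℝ W :=
  ⨅ m < k, LinearMap.ker ((innerₗ E (φ m : E)).comp W.subtype)

theorem mem_orthToFirst {φ : ℕ → W} {k : ℕ} {u : W} :
    u ∈ orthToFirst φ k ↔ ∀ m < k, ⟪(φ m : E), (u : E)⟫ = 0 := by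
  simp [orthToFirst]

theorem sub_sum_inner_smul_mem_orthToFirst {φ : ℕ → W}
    (horth : Orthonormal ℝ fun n => (φ n : E)) (k : ℕ) (v : W) :
    v - ∑ m ∈ Finset.range k, ⟪(φ m : E), (v : E)⟫ • φ m ∈ orthToFirst φ k := by
  refine mem_orthToFirst.2 fun m hm => ?_
  have hproj := horth.inner_right_sum (fun n => ⟪(φ n : E), (v : E)⟫)
    (Finset.mem_range.2 hm)
  simp only [Submodule.coe_sub, Submodule.coe_sum, Submodule.coe_smul, inner_sub_right]
  rw [hproj, sub_self]

theorem LinearMap.eq_zero_of_orthToFirst {φ : ℕ → W}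
    (horth : Orthonormal ℝ fun n => (φ n : E)) {k : ℕ} (f : W →ₗ[ℝ] ℝ)
    (horthToFirst : ∀ u ∈ orthToFirst φ k, f u = 0) (hfirst : ∀ m < k, f (φ m) = 0) :
    f = 0 := by
  ext v
  have hsplit := horthToFirst _ (sub_sum_inner_smul_mem_orthToFirst horth k v)
  rw [map_sub, map_sum, Finset.sum_eq_zero fun m hm => by
    rw [map_smul, hfirst m (Finset.mem_range.1 hm), smul_zero], sub_zero] at hsplit
  exact hsplit

end Truncation

theorem Orthonormal.hasSum_inner_sq {ι : Type*} {v : ι → H} (hv : Orthonormal ℝ v)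
    (htotal : ∀ x, (∀ i, ⟪v i, x⟫ = 0) → x = 0) (x : H) :
    HasSum (fun i => ⟪v i, x⟫ ^ 2) (‖x‖ ^ 2) := by
  have hspan : (Submodule.span ℝ (Set.range v))ᗮ = ⊥ :=
    (Submodule.eq_bot_iff _).2 fun x hx =>
      htotal x fun i => hx (v i) (Submodule.subset_span ⟨i, rfl⟩)
  have hparseval := (HilbertBasis.mkOfOrthogonalEqBot hv hspan).hasSum_inner_mul_inner x x
  simp only [HilbertBasis.coe_mkOfOrthogonalEqBot, real_inner_self_eq_norm_sq] at hparseval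
  simpa only [real_inner_comm x, sq] using hparseval

theorem eigenvalue_mul_norm_sq_le_of_mem_orthToFirst {W : Submodule ℝ H}
    {b : W →ₗ[ℝ] W →ₗ[ℝ] ℝ} {φ : ℕ → W} {lam : ℕ → ℝ}
    (hsymm : ∀ u v : W, b u v = b v u) (hnonneg : ∀ u : W, 0 ≤ b u u) (hmono : Monotone lam)
    (horth : Orthonormal ℝ fun n => (φ n : H))
    (heig : ∀ n v, b (φ n) v = lam n * ⟪(φ n : H), (v : H)⟫)
    (hcomplete : ∀ x : H, (∀ n, ⟪(φ n : H), x⟫ = 0) → x = 0)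
    {k : ℕ} {u : W} (hu : u ∈ orthToFirst φ k) :
    lam k * ‖(u : H)‖ ^ 2 ≤ b u u := by
  have hterm : ∀ n, lam k * ⟪(φ n : H), (u : H)⟫ ^ 2 ≤ lam n * ⟪(φ n : H), (u : H)⟫ ^ 2 := by
    intro n
    rcases lt_or_ge n k with hn | hn
    · simp [mem_orthToFirst.1 hu n hn]
    · exact mul_le_mul_of_nonneg_right (hmono hn) (sq_nonneg _)
  refine hasSum_le_of_sum_le ((horth.hasSum_inner_sq hcomplete u).mul_left (lam k)) fun s => ?_
  exact (Finset.sum_le_sum fun n _ => hterm n).trans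
    (sum_eigenvalue_mul_inner_sq_le hsymm hnonneg horth heig s u)

theorem minmax_equality_case_general
    (W : Submodule ℝ H) (b : W →ₗ[ℝ] W →ₗ[ℝ] ℝ)
    (hsymm : ∀ u v : W, b u v = b v u) (hnonneg : ∀ u : W, 0 ≤ b u u)
    (lam : ℕ → ℝ) (hmono : Monotone lam)
    (φ : ℕ → W) (horth : Orthonormal ℝ fun n => ((φ n : H)))
    (heig : ∀ (n : ℕ) (v : W), b (φ n) v = lam n * ⟪((φ n : H)), (v : H)⟫)
    (hcomplete : ∀ x : H, (∀ n, ⟪((φ n : H)), x⟫ = 0) → x = 0)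
    (k : ℕ)
    (ψs : W)
    (horthφ : ∀ m < k - 1, ⟪((φ m : H)), (ψs : H)⟫ = 0)
    (hach : b ψs ψs = lam (k - 1) * ‖(ψs : H)‖ ^ 2) :
    ∀ v : W, b ψs v = lam (k - 1) * ⟪(ψs : H), (v : H)⟫ := by
  set μ := lam (k - 1)
  set B : W →ₗ[ℝ] W →ₗ[ℝ] ℝ := b - μ • (innerₗ H).compl₁₂ W.subtype W.subtype
  have hB : ∀ u v, B u v = b u v - μ * ⟪(u : H), (v : H)⟫ := fun _ _ => rfl
  have hBsymm : ∀ u v, B u v = B v u := fun u v => by rw [hB, hB, hsymm, real_inner_comm]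
  have hBpos : ∀ u ∈ orthToFirst φ (k - 1), 0 ≤ B u u := fun u hu => by
    rw [hB, real_inner_self_eq_norm_sq]
    linarith [eigenvalue_mul_norm_sq_le_of_mem_orthToFirst hsymm hnonneg hmono horth heig
      hcomplete hu]
  have hψs : ψs ∈ orthToFirst φ (k - 1) := mem_orthToFirst.2 horthφ
  have hBψs : B ψs ψs = 0 := by rw [hB, real_inner_self_eq_norm_sq, hach, sub_self]
  have hvanish : B ψs = 0 := LinearMap.eq_zero_of_orthToFirst horth (B ψs)
    (fun w hw => B.apply_eq_zero_of_nonneg_of_apply_self_eq_zero hBsymm hBpos hψs hw hBψs)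
    (fun m hm => by rw [hB, hsymm, heig, real_inner_comm (φ m : H), horthφ m hm]; ring)
  intro v
  rw [← sub_eq_zero, ← hB, hvanish, LinearMap.zero_apply]

/-- equality case in the min-max bound.  In the setting of the previous
statement, if moreover `λ_k = Λ`, the Rayleigh quotients `b(ψᵢ,ψᵢ)/‖ψᵢ‖²` are all `≤ Λ`,
and `ψ = c₁ψ₁ + ⋯ + c_kψ_k` (all `cᵢ ≠ 0`) is orthogonal in `H` to `φ₁, …, φ_{k−1}` and
achieves `b(ψ,ψ)/‖ψ‖² = λ_k`, then `ψ` is an eigenvector of the operator generated by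
`b` with eigenvalue `λ_k` (expressed weakly: `b(ψ, v) = λ_k ⟪ψ, v⟫` for all `v ∈ W`). -/
theorem minmax_equality_case
    (W : Submodule ℝ H) (b : W →ₗ[ℝ] W →ₗ[ℝ] ℝ)
    (hdense : Dense (W : Set H))
    (hsymm : ∀ u v : W, b u v = b v u) (hnonneg : ∀ u : W, 0 ≤ b u u)
    (hclosed : IsClosedForm W b) (hcompact : IsCompactlyEmbedded W b)
    (lam : ℕ → ℝ) (hmono : Monotone lam)
    (φ : ℕ → W) (horth : Orthonormal ℝ fun n => ((φ n : H)))
    (heig : ∀ (n : ℕ) (v : W), b (φ n) v = lam n * ⟪((φ n : H)), (v : H)⟫)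
    (hcomplete : ∀ x : H, (∀ n, ⟪((φ n : H)), x⟫ = 0) → x = 0)
    (k : ℕ) (hk : 1 ≤ k) (Λ : ℝ) (ψ : Fin k → W)
    (hne : ∀ i, (ψ i : H) ≠ 0)
    (horthH : ∀ i j, i ≠ j → ⟪((ψ i : H)), ((ψ j : H))⟫ = 0)
    (horthb : ∀ i j, i ≠ j → b (ψ i) (ψ j) = 0)
    (hray : ∀ i, b (ψ i) (ψ i) ≤ Λ * ‖(ψ i : H)‖ ^ 2)
    (heqΛ : lam (k - 1) = Λ)
    (c : Fin k → ℝ) (hc : ∀ i, c i ≠ 0)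
    (ψs : W) (hψs : ψs = ∑ i, c i • ψ i)
    (hψs_ne : (ψs : H) ≠ 0)
    (horthφ : ∀ m < k - 1, ⟪((φ m : H)), (ψs : H)⟫ = 0)
    (hach : b ψs ψs = lam (k - 1) * ‖(ψs : H)‖ ^ 2) :
    ∀ v : W, b ψs v = lam (k - 1) * ⟪(ψs : H), (v : H)⟫ :=
  minmax_equality_case_general W b hsymm hnonneg lam hmono φ horth heig hcomplete k ψs horthφ hach
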